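/- arXiv:1107.0235 — 2 statements merged into one kernel-verified Lean document; each statement's English description precedes it below -/
import Mathlib

section
/- Let (G₁,ν₁) and (G₂,ν₂) be connected deformation graphs, each with more than one vertex, with ranks r₁, r₂ and volumes n₁, n₂, and fix a gradation f₁ on G₁. Let G₁ × G₂ be the product graph with vertex set V₁ × V₂, with (g₁,g₂) adjacent to (g₁',g₂') iff either g₂ = g₂' and g₁ adjacent to g₁' in G₁, or g₁ = g₁' and g₂ adjacent to g₂' in G₂, and with connection ν((g₁,g₂),(g₁',g₂)) = ν₁(g₁,g₁'), ν((g₁,g₂),(g₁,g₂')) = (−1)^{f₁(g₁)} ν₂(g₂,g₂'), and ν = 0 on all other pairs. Then (G₁ × G₂, ν) is a deformation graph of rank r₁ + r₂, and its characteristic number χ(G₁ × G₂, ν) = |det A| (for any representation matrix A of the product) equals (r₁ + r₂)^{n₁ n₂}. -/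
/-!
Write `S = diag((-1)^{f₁})`. The product connection is the matrix `ν₁ ⊗ 1 + S ⊗ ν₂`; since `f₁` is a
gradation, `S` anticommutes with `ν₁`, and `S² = 1`, so its square is `ν₁² ⊗ 1 + 1 ⊗ ν₂²`. This
gives deformability and rank `r₁ + r₂` at once.

For a deformation graph of rank `r`, deformability makes every representation matrix satisfy
`A Aᵀ = r • 1`, hence `(det A)² = r ^ N` with `N` the size of a distance component. Counting the
squared entries of `A` by rows and by columns shows that the two distance components have the same
size as soon as `r ≠ 0`, which holds for a connected graph with an edge; so `N = 2 n₁ n₂`.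
-/

/-- A gradation on a simple graph: adjacent vertices have values differing by ±1. -/
def IsGradation {V : Type*} (G : SimpleGraph V) (f : V → ℤ) : Prop :=
  ∀ ⦃a b : V⦄, G.Adj a b → f a - f b = 1 ∨ f a - f b = -1

/-- A connection on a graph: a symmetric integer function nonzero exactly on edges. -/
def IsConnection {V : Type*} (G : SimpleGraph V) (ν : V → V → ℤ) : Prop :=
  (∀ a b : V, ν a b = ν b a) ∧ ∀ a b : V, ν a b ≠ 0 ↔ G.Adj a b

/-- A deformable connection: `∑_c ν a c * ν c b = 0` for all vertices at distance 2. -/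
def IsDeformable {V : Type*} [Fintype V] (G : SimpleGraph V) (ν : V → V → ℤ) : Prop :=
  ∀ a b : V, G.dist a b = 2 → (∑ c : V, ν a c * ν c b) = 0

/-- The product connection on the box product `G₁ □ G₂`, twisted by a gradation `f₁`
on the first factor:  `ν((g₁,g₂),(g₁',g₂)) = ν₁(g₁,g₁')` and
`ν((g₁,g₂),(g₁,g₂')) = (-1)^{f₁ g₁} ν₂(g₂,g₂')`, and `0` on all other pairs. -/
noncomputable def prodConn {V₁ V₂ : Type*} [DecidableEq V₁] [DecidableEq V₂]
    (f₁ : V₁ → ℤ) (ν₁ : V₁ → V₁ → ℤ) (ν₂ : V₂ → V₂ → ℤ) :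
    V₁ × V₂ → V₁ × V₂ → ℤ := fun p q =>
  if p.2 = q.2 then ν₁ p.1 q.1
  else if p.1 = q.1 then (((-1 : ℤˣ) ^ f₁ p.1 : ℤˣ) : ℤ) * ν₂ p.2 q.2
  else 0

open Matrix
open scoped Kronecker

lemma Fintype.sum_subtype_eq_sum_of_ne_zero {ι M : Type*} [Fintype ι] [AddCommMonoid M]
    {p : ι → Prop} [DecidablePred p] {F : ι → M} (hF : ∀ i, F i ≠ 0 → p i) :
    ∑ i : {i // p i}, F i = ∑ i, F i := by
  rw [← Fintype.sum_subtype_add_sum_subtype p F,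
    Fintype.sum_eq_zero (fun i : {i // ¬ p i} => F i) fun i => not_not.mp (mt (hF i) i.2),
    add_zero]

lemma Matrix.det_sq_of_mul_transpose_eq_smul_one {n R : Type*} [Fintype n] [DecidableEq n]
    [CommRing R] {A : Matrix n n R} {r : R} (h : A * Aᵀ = r • 1) :
    A.det ^ 2 = r ^ Fintype.card n := by
  have := congrArg det h
  rwa [det_mul, det_transpose, det_smul, det_one, mul_one, ← sq] at this

lemma Int.negOnePow_add_negOnePow {m n : ℤ} (h : m - n = 1 ∨ m - n = -1) :
    (m.negOnePow : ℤ) + n.negOnePow = 0 := by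
  rcases h with h | h
  · rw [show m = n + 1 by omega, Int.negOnePow_succ, Units.val_neg, neg_add_cancel]
  · rw [show n = m + 1 by omega, Int.negOnePow_succ, Units.val_neg, add_neg_cancel]

lemma Int.natAbs_eq_of_sq_eq_pow {d : ℤ} {m k : ℕ} (h : d ^ 2 = (m : ℤ) ^ (2 * k)) :
    d.natAbs = m ^ k := by
  rw [← Int.natAbs_natCast (m ^ k), Int.natAbs_eq_iff_sq_eq, h]
  push_cast
  ring

section Connection

variable {V : Type*} {G : SimpleGraph V} {ν : V → V → ℤ} {a b : V}

namespace IsConnection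

lemma eq_zero_of_not_adj (hcon : IsConnection G ν) (h : ¬ G.Adj a b) : ν a b = 0 :=
  not_not.mp (mt (hcon.2 a b).mp h)

lemma apply_self (hcon : IsConnection G ν) (a : V) : ν a a = 0 :=
  hcon.eq_zero_of_not_adj (G.irrefl)

variable [Fintype V]

lemma mul_self_apply_self (hcon : IsConnection G ν) (v : V) :
    (of ν * of ν) v v = ∑ w, ν w v ^ 2 := by
  simp only [mul_apply, of_apply, sq, hcon.1 v]

lemma mul_self_apply_eq_zero (hcon : IsConnection G ν) (hdef : IsDeformable G ν)
    (hne : a ≠ b) (hadj : ¬ G.Adj a b) : (of ν * of ν) a b = 0 := by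
  by_cases h : ∃ c, ν a c * ν c b ≠ 0
  · obtain ⟨c, hc⟩ := h
    have hac : G.Adj a c := (hcon.2 a c).mp (left_ne_zero_of_mul hc)
    have hcb : G.Adj c b := (hcon.2 c b).mp (right_ne_zero_of_mul hc)
    have hdist : G.dist a b = 2 := by
      have hle : G.dist a b ≤ 2 := by simpa using G.dist_le (hac.toWalk.append hcb.toWalk)
      have h0 : G.dist a b ≠ 0 := (hac.reachable.trans hcb.reachable).dist_eq_zero_iff.not.mpr hne
      have h1 : G.dist a b ≠ 1 := SimpleGraph.dist_eq_one_iff_adj.not.mpr hadj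
      omega
    exact hdef a b hdist
  · push Not at h
    exact Finset.sum_eq_zero fun c _ => h c

end IsConnection

lemma IsDeformable.of_mul_self_apply [Fintype V]
    (h : ∀ a b, a ≠ b → ¬ G.Adj a b → (of ν * of ν) a b = 0) : IsDeformable G ν := by
  intro a b hdist
  have hne : a ≠ b := by rintro rfl; simp at hdist
  exact h a b hne (fun hadj => by simp [SimpleGraph.dist_eq_one_iff_adj.mpr hadj] at hdist)

end Connection

section Gradation

variable {V : Type*} {G : SimpleGraph V} {g : V → ℤ} {a b : V}

lemma IsGradation.eq_one_sub_of_adj (hg : IsGradation G g) (hg01 : ∀ v, g v = 0 ∨ g v = 1)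
    (h : G.Adj a b) : g b = 1 - g a := by
  rcases hg h with hd | hd <;> rcases hg01 a with ha | ha <;> rcases hg01 b with hb | hb <;> omega

variable [Fintype V]

lemma card_level_zero_add_card_level_one (hg01 : ∀ v, g v = 0 ∨ g v = 1) :
    Fintype.card {v // g v = 0} + Fintype.card {v // g v = 1} = Fintype.card V := by
  have hone : Fintype.card {v // g v = 1} = Fintype.card {v // ¬ g v = 0} :=
    Fintype.card_congr (Equiv.subtypeEquivRight fun v => by rcases hg01 v with h | h <;> simp [h])
  rw [hone, Fintype.card_subtype_compl]
  have := Fintype.card_subtype_le fun v => g v = 0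
  omega

variable {ν : V → V → ℤ} {r : ℤ}

lemma IsConnection.rank_pos (hcon : IsConnection G ν) (hconn : G.Connected)
    (hcard : 1 < Fintype.card V) (hr : ∀ v, ∑ w, ν w v ^ 2 = r) : 0 < r := by
  have : Nontrivial V := Fintype.one_lt_card_iff_nontrivial.mp hcard
  obtain ⟨v⟩ := hconn.nonempty
  obtain ⟨u, hvu⟩ := hconn.preconnected.exists_adj_of_nontrivial v
  calc 0 < ν u v ^ 2 := pow_two_pos_of_ne_zero ((hcon.2 u v).mpr hvu.symm)
    _ ≤ ∑ w, ν w v ^ 2 := Finset.single_le_sum (fun w _ => sq_nonneg (ν w v)) (Finset.mem_univ u)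
    _ = r := hr v

lemma IsConnection.sum_sq_opposite_level (hcon : IsConnection G ν) (hg : IsGradation G g)
    (hg01 : ∀ v, g v = 0 ∨ g v = 1) (hr : ∀ v, ∑ w, ν w v ^ 2 = r) {c : ℤ} (v : V)
    (hv : g v = 1 - c) : ∑ w : {w // g w = c}, ν w v ^ 2 = r := by
  rw [Fintype.sum_subtype_eq_sum_of_ne_zero (F := fun w => ν w v ^ 2) fun w hw => ?_, hr v]
  have := hg.eq_one_sub_of_adj hg01 ((hcon.2 w v).mp (pow_ne_zero_iff two_ne_zero |>.mp hw))
  omega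

lemma IsConnection.card_level_zero_eq_card_level_one (hcon : IsConnection G ν)
    (hg : IsGradation G g) (hg01 : ∀ v, g v = 0 ∨ g v = 1) (hr : ∀ v, ∑ w, ν w v ^ 2 = r)
    (hr0 : r ≠ 0) : Fintype.card {v // g v = 0} = Fintype.card {v // g v = 1} := by
  have hrows (p : {v // g v = 0}) : ∑ q : {v // g v = 1}, ν q p ^ 2 = r :=
    hcon.sum_sq_opposite_level hg hg01 hr p (by simp [p.2])
  have hcols (q : {v // g v = 1}) : ∑ p : {v // g v = 0}, ν p q ^ 2 = r :=
    hcon.sum_sq_opposite_level hg hg01 hr q (by simp [q.2])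
  have hcount : (Fintype.card {v // g v = 0} : ℤ) * r = Fintype.card {v // g v = 1} * r :=
    calc _ = ∑ p : {v // g v = 0}, ∑ q : {v // g v = 1}, ν q p ^ 2 := by simp [hrows]
      _ = ∑ q : {v // g v = 1}, ∑ p : {v // g v = 0}, ν p q ^ 2 := by
          rw [Finset.sum_comm]
          exact Fintype.sum_congr _ _ fun q => Fintype.sum_congr _ _ fun p => by rw [hcon.1]
      _ = _ := by simp [hcols]
  exact_mod_cast mul_right_cancel₀ hr0 hcount

lemma IsConnection.card_eq_two_mul_card_level_zero (hcon : IsConnection G ν)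
    (hconn : G.Connected) (hcard : 1 < Fintype.card V) (hr : ∀ v, ∑ w, ν w v ^ 2 = r)
    (hg : IsGradation G g) (hg01 : ∀ v, g v = 0 ∨ g v = 1) :
    Fintype.card V = 2 * Fintype.card {v // g v = 0} := by
  have := hcon.card_level_zero_eq_card_level_one hg hg01 hr (hcon.rank_pos hconn hcard hr).ne'
  have := card_level_zero_add_card_level_one hg01
  omega

def representationMatrix (ν : V → V → ℤ) (e : {v // g v = 0} ≃ {v // g v = 1}) :
    Matrix {v // g v = 0} {v // g v = 0} ℤ :=
  of fun p q => ν p (e q)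

lemma IsConnection.representationMatrix_mul_transpose [DecidableEq V] (hcon : IsConnection G ν)
    (hdef : IsDeformable G ν) (hr : ∀ v, ∑ w, ν w v ^ 2 = r) (hg : IsGradation G g)
    (hg01 : ∀ v, g v = 0 ∨ g v = 1) (e : {v // g v = 0} ≃ {v // g v = 1}) :
    representationMatrix ν e * (representationMatrix ν e)ᵀ = r • 1 := by
  ext p p'
  have hsupp : ∀ w, ν p w * ν p' w ≠ 0 → g w = 1 := fun w hw => by
    simpa [p.2] using hg.eq_one_sub_of_adj hg01 ((hcon.2 p w).mp (left_ne_zero_of_mul hw))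
  calc (representationMatrix ν e * (representationMatrix ν e)ᵀ) p p'
      = ∑ w : {v // g v = 1}, ν p w * ν p' w :=
        Equiv.sum_comp e fun w : {v // g v = 1} => ν p w * ν p' w
    _ = (of ν * of ν) p p' := by
        rw [Fintype.sum_subtype_eq_sum_of_ne_zero hsupp, mul_apply]
        simp only [of_apply, hcon.1 p']
    _ = (r • 1 : Matrix {v // g v = 0} {v // g v = 0} ℤ) p p' := by
        rcases eq_or_ne p p' with rfl | hne
        · simp [hcon.mul_self_apply_self, hr]
        · have hadj : ¬ G.Adj p p' := fun h => by
            have := hg.eq_one_sub_of_adj hg01 h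
            rw [p.2, p'.2] at this
            omega
          simp [hcon.mul_self_apply_eq_zero hdef (Subtype.coe_ne_coe.mpr hne) hadj, hne]

end Gradation

section Product

variable {V₁ V₂ : Type*} [DecidableEq V₁] [DecidableEq V₂] {G₁ : SimpleGraph V₁}
  {G₂ : SimpleGraph V₂} {ν₁ : V₁ → V₁ → ℤ} {ν₂ : V₂ → V₂ → ℤ} {f₁ : V₁ → ℤ}

lemma isConnection_prodConn (hcon₁ : IsConnection G₁ ν₁) (hcon₂ : IsConnection G₂ ν₂) :
    IsConnection (G₁.boxProd G₂) (prodConn f₁ ν₁ ν₂) := by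
  refine ⟨fun p q => ?_, fun p q => ?_⟩
  · unfold prodConn
    rcases eq_or_ne p.1 q.1 with h1 | h1 <;> rcases eq_or_ne p.2 q.2 with h2 | h2 <;>
      simp [h1, h2, Ne.symm, hcon₁.1 p.1, hcon₂.1 p.2]
  · unfold prodConn
    rcases eq_or_ne p.1 q.1 with h1 | h1 <;> rcases eq_or_ne p.2 q.2 with h2 | h2 <;>
      simp [SimpleGraph.boxProd_adj, h1, h2, Ne.symm, hcon₁.2, hcon₂.2]

lemma of_prodConn (hcon₂ : IsConnection G₂ ν₂) :
    of (prodConn f₁ ν₁ ν₂) =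
      of ν₁ ⊗ₖ 1 + diagonal (fun a => ((f₁ a).negOnePow : ℤ)) ⊗ₖ of ν₂ := by
  ext ⟨a₁, a₂⟩ ⟨b₁, b₂⟩
  unfold prodConn
  rcases eq_or_ne a₁ b₁ with rfl | h1 <;> rcases eq_or_ne a₂ b₂ with rfl | h2 <;>
    simp [one_apply, Int.negOnePow_def, hcon₂.apply_self, *]

variable [Fintype V₁] [Fintype V₂]

lemma diagonal_negOnePow_mul_self :
    diagonal (fun a => ((f₁ a).negOnePow : ℤ)) * diagonal (fun a => ((f₁ a).negOnePow : ℤ))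
      = 1 := by
  simp [diagonal_mul_diagonal, ← Units.val_mul, Int.units_mul_self]

lemma anticommute_diagonal_negOnePow (hcon₁ : IsConnection G₁ ν₁) (hf₁ : IsGradation G₁ f₁) :
    of ν₁ * diagonal (fun a => ((f₁ a).negOnePow : ℤ))
      + diagonal (fun a => ((f₁ a).negOnePow : ℤ)) * of ν₁ = 0 := by
  ext a b
  simp only [Matrix.add_apply, mul_diagonal, diagonal_mul, of_apply, Matrix.zero_apply]
  by_cases h : G₁.Adj a b
  · linear_combination ν₁ a b * Int.negOnePow_add_negOnePow (hf₁ h)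
  · simp [hcon₁.eq_zero_of_not_adj h]

lemma of_prodConn_mul_self (hcon₁ : IsConnection G₁ ν₁) (hcon₂ : IsConnection G₂ ν₂)
    (hf₁ : IsGradation G₁ f₁) :
    of (prodConn f₁ ν₁ ν₂) * of (prodConn f₁ ν₁ ν₂) =
      (of ν₁ * of ν₁) ⊗ₖ 1 + 1 ⊗ₖ (of ν₂ * of ν₂) := by
  rw [of_prodConn hcon₂]
  set S := diagonal (fun a => ((f₁ a).negOnePow : ℤ))
  have hcross : (of ν₁ * S) ⊗ₖ of ν₂ + (S * of ν₁) ⊗ₖ of ν₂ = 0 := by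
    rw [← add_kronecker, anticommute_diagonal_negOnePow hcon₁ hf₁, zero_kronecker]
  calc (of ν₁ ⊗ₖ 1 + S ⊗ₖ of ν₂) * (of ν₁ ⊗ₖ 1 + S ⊗ₖ of ν₂)
      = (of ν₁ * of ν₁) ⊗ₖ 1 + ((of ν₁ * S) ⊗ₖ of ν₂ + (S * of ν₁) ⊗ₖ of ν₂)
          + (S * S) ⊗ₖ (of ν₂ * of ν₂) := by
        simp only [add_mul, mul_add, ← mul_kronecker_mul, Matrix.mul_one, Matrix.one_mul]
        abel
    _ = (of ν₁ * of ν₁) ⊗ₖ 1 + 1 ⊗ₖ (of ν₂ * of ν₂) := by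
        rw [hcross, diagonal_negOnePow_mul_self, add_zero]

lemma isDeformable_prodConn (hcon₁ : IsConnection G₁ ν₁) (hdef₁ : IsDeformable G₁ ν₁)
    (hcon₂ : IsConnection G₂ ν₂) (hdef₂ : IsDeformable G₂ ν₂) (hf₁ : IsGradation G₁ f₁) :
    IsDeformable (G₁.boxProd G₂) (prodConn f₁ ν₁ ν₂) := by
  refine IsDeformable.of_mul_self_apply fun ⟨a₁, a₂⟩ ⟨b₁, b₂⟩ hne hadj => ?_
  simp only [SimpleGraph.boxProd_adj, not_or, not_and] at hadj
  rw [of_prodConn_mul_self hcon₁ hcon₂ hf₁, Matrix.add_apply, kronecker_apply, kronecker_apply]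
  rcases eq_or_ne a₂ b₂ with rfl | h₂
  · have h₁ : a₁ ≠ b₁ := fun h => hne (by rw [h])
    simp [hcon₁.mul_self_apply_eq_zero hdef₁ h₁ fun h => hadj.1 h rfl, h₁]
  rcases eq_or_ne a₁ b₁ with rfl | h₁
  · simp [hcon₂.mul_self_apply_eq_zero hdef₂ h₂ fun h => hadj.2 h rfl, h₂]
  · simp [h₁, h₂]

lemma sum_prodConn_sq (hcon₁ : IsConnection G₁ ν₁) (hcon₂ : IsConnection G₂ ν₂)
    (hf₁ : IsGradation G₁ f₁) {r₁ r₂ : ℤ} (hr₁ : ∀ v, ∑ w, ν₁ w v ^ 2 = r₁)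
    (hr₂ : ∀ v, ∑ w, ν₂ w v ^ 2 = r₂) (p : V₁ × V₂) :
    ∑ q, prodConn f₁ ν₁ ν₂ q p ^ 2 = r₁ + r₂ := by
  rw [← (isConnection_prodConn hcon₁ hcon₂).mul_self_apply_self,
    of_prodConn_mul_self hcon₁ hcon₂ hf₁]
  simp [hcon₁.mul_self_apply_self, hcon₂.mul_self_apply_self, hr₁, hr₂]

end Product

/-- The product of two connected deformation graphs of ranks `r₁, r₂` and volumes
`n₁, n₂` is a deformation graph of rank `r₁ + r₂`, and its characteristic number
(the absolute value of the determinant of any representation matrix) is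
`(r₁ + r₂)^(n₁ n₂)`. -/
theorem product_deformation_graph
    {V₁ V₂ : Type*} [Fintype V₁] [Fintype V₂] [DecidableEq V₁] [DecidableEq V₂]
    (G₁ : SimpleGraph V₁) (G₂ : SimpleGraph V₂) (ν₁ : V₁ → V₁ → ℤ) (ν₂ : V₂ → V₂ → ℤ)
    (hcon₁ : IsConnection G₁ ν₁) (hdef₁ : IsDeformable G₁ ν₁)
    (hconn₁ : G₁.Connected) (hcard₁ : 1 < Fintype.card V₁)
    (hcon₂ : IsConnection G₂ ν₂) (hdef₂ : IsDeformable G₂ ν₂)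
    (hconn₂ : G₂.Connected) (hcard₂ : 1 < Fintype.card V₂)
    (r₁ r₂ n₁ n₂ : ℕ)
    (hr₁ : ∀ v : V₁, (∑ w : V₁, ν₁ w v ^ 2) = (r₁ : ℤ))
    (hr₂ : ∀ v : V₂, (∑ w : V₂, ν₂ w v ^ 2) = (r₂ : ℤ))
    (g₁ : V₁ → ℤ) (hg₁ : IsGradation G₁ g₁) (hg₁01 : ∀ v : V₁, g₁ v = 0 ∨ g₁ v = 1)
    (hn₁ : Fintype.card {v : V₁ // g₁ v = 0} = n₁)
    (g₂ : V₂ → ℤ) (hg₂ : IsGradation G₂ g₂) (hg₂01 : ∀ v : V₂, g₂ v = 0 ∨ g₂ v = 1)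
    (hn₂ : Fintype.card {v : V₂ // g₂ v = 0} = n₂)
    (f₁ : V₁ → ℤ) (hf₁ : IsGradation G₁ f₁) :
    IsConnection (G₁.boxProd G₂) (prodConn f₁ ν₁ ν₂) ∧
    IsDeformable (G₁.boxProd G₂) (prodConn f₁ ν₁ ν₂) ∧
    (∀ p : V₁ × V₂, (∑ q : V₁ × V₂, prodConn f₁ ν₁ ν₂ q p ^ 2) = (r₁ : ℤ) + (r₂ : ℤ)) ∧
    (∀ g : V₁ × V₂ → ℤ, IsGradation (G₁.boxProd G₂) g → (∀ p, g p = 0 ∨ g p = 1) →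
      ∀ e : {p : V₁ × V₂ // g p = 0} ≃ {p : V₁ × V₂ // g p = 1},
        (Matrix.det (Matrix.of fun (p q : {p : V₁ × V₂ // g p = 0}) =>
            prodConn f₁ ν₁ ν₂ p.1 (e q).1)).natAbs = (r₁ + r₂) ^ (n₁ * n₂)) := by
  have hcon := isConnection_prodConn (f₁ := f₁) hcon₁ hcon₂
  have hdef := isDeformable_prodConn hcon₁ hdef₁ hcon₂ hdef₂ hf₁
  have hrank := sum_prodConn_sq hcon₁ hcon₂ hf₁ hr₁ hr₂
  refine ⟨hcon, hdef, hrank, fun g hg hg01 e => Int.natAbs_eq_of_sq_eq_pow ?_⟩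
  have hcard : Fintype.card {p // g p = 0} = 2 * (n₁ * n₂) := by
    have hsum := card_level_zero_add_card_level_one hg01
    rw [← Fintype.card_congr e, Fintype.card_prod,
      hcon₁.card_eq_two_mul_card_level_zero hconn₁ hcard₁ hr₁ hg₁ hg₁01,
      hcon₂.card_eq_two_mul_card_level_zero hconn₂ hcard₂ hr₂ hg₂ hg₂01, hn₁, hn₂] at hsum
    linarith
  have hdet := det_sq_of_mul_transpose_eq_smul_one
    (hcon.representationMatrix_mul_transpose hdef hrank hg hg01 e)
  rw [hcard] at hdet
  exact_mod_cast hdet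
end

section
/- Let (G,ν) be a connected deformation graph with common vertex rank r > 0, and let F be a field whose characteristic is either 0 or a prime that does not divide r. Then for every gradation f on G, the chain complex over F with C_k the F-vector space with basis the vertices v with f(v) = k and differential d(v) = Σ_{f(w)=f(v)−1} ν(v,w)·w is exact, i.e., H_k = 0 for all k; likewise the dual cochain complex with δ(v) = Σ_{f(w)=f(v)+1} ν(v,w)·w satisfies H^k = 0 for all k. -/
/-- The differential over a field `F`: the linear map from the `F`-vector space on the
level-`j` vertices to the one on the level-`k` vertices, `v ↦ ∑_w ν v w • w`. -/
noncomputable def dmapF (F : Type*) [Field F] {V : Type*} [Fintype V] [DecidableEq V]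
    (f : V → ℤ) (ν : V → V → ℤ) (j k : ℤ) :
    ({v : V // f v = j} → F) →ₗ[F] ({v : V // f v = k} → F) :=
  Matrix.toLin' (Matrix.of fun (w : {v : V // f v = k}) (v : {v : V // f v = j}) =>
    (ν v.1 w.1 : F))

/-- The `k`-th homology of the chain complex over `F` associated to `(f, ν)`. -/
noncomputable abbrev HkF (F : Type*) [Field F] {V : Type*} [Fintype V] [DecidableEq V]
    (f : V → ℤ) (ν : V → V → ℤ) (k : ℤ) :=
  LinearMap.ker (dmapF F f ν k (k - 1)) ⧸
    ((LinearMap.range (dmapF F f ν (k + 1) k)).comap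
      (LinearMap.ker (dmapF F f ν k (k - 1))).subtype)

/-- The `k`-th cohomology of the cochain complex over `F` associated to `(f, ν)`. -/
noncomputable abbrev coHkF (F : Type*) [Field F] {V : Type*} [Fintype V] [DecidableEq V]
    (f : V → ℤ) (ν : V → V → ℤ) (k : ℤ) :=
  LinearMap.ker (dmapF F f ν k (k + 1)) ⧸
    ((LinearMap.range (dmapF F f ν (k - 1) k)).comap
      (LinearMap.ker (dmapF F f ν k (k + 1))).subtype)

/-! The Laplacian `∂δ + δ∂` of the complex is multiplication by the rank `r`: its diagonal
entries are `∑ w, ν w v ^ 2 = r`, and an off-diagonal entry joins two distinct, non-adjacent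
vertices of the same level, so either all its terms vanish or the vertices are at distance 2
and it is zero by deformability. As `r` is invertible in `F`, `r⁻¹ δ` is a contracting homotopy
and both complexes are exact. -/

open Finset

section Homotopy

variable {R M N P : Type*} [CommSemiring R] [AddCommMonoid M] [AddCommMonoid N]
  [AddCommMonoid P] [Module R M] [Module R N] [Module R P]

theorem LinearMap.ker_le_range_of_comp_add_comp_eq_smul {d : M →ₗ[R] N} {d' : P →ₗ[R] M}
    {e : N →ₗ[R] M} {e' : M →ₗ[R] P} {c : R} (hc : IsUnit c)
    (h : e ∘ₗ d + d' ∘ₗ e' = c • LinearMap.id) : LinearMap.ker d ≤ LinearMap.range d' := by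
  intro x hx
  have hcx : d' (e' x) = c • x := by
    simpa [LinearMap.mem_ker.mp hx] using LinearMap.congr_fun h x
  refine ⟨(↑hc.unit⁻¹ : R) • e' x, ?_⟩
  rw [map_smul, hcx, smul_smul, hc.val_inv_mul, one_smul]

end Homotopy

section Graph

variable {V : Type*} {G : SimpleGraph V} {f : V → ℤ} {ν : V → V → ℤ}

theorem IsGradation.ne_of_adj (hf : IsGradation G f) {a b : V} (h : G.Adj a b) : f a ≠ f b := by
  rcases hf h with h | h <;> omega

theorem SimpleGraph.dist_eq_two_of_adj_adj {a b c : V} (hab : a ≠ c) (hac : ¬ G.Adj a c)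
    (h₁ : G.Adj a b) (h₂ : G.Adj b c) : G.dist a c = 2 := by
  have : G.edist a c = 2 := G.edist_eq_two_iff.mpr ⟨hab, hac, b, h₁, h₂.symm⟩
  simp [SimpleGraph.dist, this]

theorem IsGradation.sum_eq_sum_level_sub_one_add_sum_level_add_one [Fintype V]
    {X : Type*} [AddCommMonoid X] (hf : IsGradation G f) {v : V} {k : ℤ} (hv : f v = k)
    {g : V → X} (hg : ∀ u, g u ≠ 0 → G.Adj v u) :
    ∑ u, g u = ∑ u : {u // f u = k - 1}, g u + ∑ u : {u // f u = k + 1}, g u := by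
  classical
  rw [← sum_subtype {u | f u = k - 1} (by simp) g, ← sum_subtype {u | f u = k + 1} (by simp) g,
    ← sum_union (disjoint_filter.mpr fun _ _ h₁ h₂ => by omega)]
  refine (sum_subset (subset_univ _) fun u _ hu => ?_).symm
  simp only [mem_union, mem_filter, mem_univ, true_and, not_or] at hu
  by_contra hne
  rcases hf (hg u hne) with h | h <;> omega

namespace IsConnection

variable [Fintype V]

theorem sum_mul_eq_zero_of_not_adj (hcon : IsConnection G ν) (hdef : IsDeformable G ν)
    {a b : V} (hab : a ≠ b) (hnadj : ¬ G.Adj a b) : ∑ c, ν a c * ν c b = 0 := by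
  by_contra hne
  obtain ⟨c, -, hc⟩ := exists_ne_zero_of_sum_ne_zero hne
  have hac : G.Adj a c := (hcon.2 a c).mp (left_ne_zero_of_mul hc)
  have hcb : G.Adj c b := (hcon.2 c b).mp (right_ne_zero_of_mul hc)
  exact hne (hdef a b (SimpleGraph.dist_eq_two_of_adj_adj hab hnadj hac hcb))

theorem sum_mul_self_eq_rank (hcon : IsConnection G ν) {r : ℤ}
    (hrank : ∀ v, ∑ w, ν w v ^ 2 = r) (a : V) : ∑ c, ν a c * ν c a = r := by
  rw [← hrank a]
  exact sum_congr rfl fun c _ => by rw [hcon.1 a c, sq]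

theorem sum_mul_eq_ite_of_level_eq [DecidableEq V] (hcon : IsConnection G ν)
    (hdef : IsDeformable G ν) {r : ℤ} (hrank : ∀ v, ∑ w, ν w v ^ 2 = r)
    (hf : IsGradation G f) {a b : V} (hab : f a = f b) :
    ∑ c, ν a c * ν c b = if a = b then r else 0 := by
  split_ifs with h
  · exact h ▸ hcon.sum_mul_self_eq_rank hrank a
  · exact hcon.sum_mul_eq_zero_of_not_adj hdef h fun hadj => hf.ne_of_adj hadj hab

end IsConnection

theorem dmapF_comp_add_comp_eq_smul [Fintype V] [DecidableEq V] (F : Type*) [Field F]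
    (hcon : IsConnection G ν) (hdef : IsDeformable G ν) {r : ℤ}
    (hrank : ∀ v, ∑ w, ν w v ^ 2 = r) (hf : IsGradation G f) (k : ℤ) :
    dmapF F f ν (k - 1) k ∘ₗ dmapF F f ν k (k - 1) + dmapF F f ν (k + 1) k ∘ₗ dmapF F f ν k (k + 1)
      = (r : F) • LinearMap.id := by
  rw [dmapF, dmapF, dmapF, dmapF, ← Matrix.toLin'_mul, ← Matrix.toLin'_mul, ← map_add,
    ← Matrix.toLin'_one, ← map_smul]
  congr 1
  ext w v
  have hsplit := hf.sum_eq_sum_level_sub_one_add_sum_level_add_one v.2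
    (g := fun u => ν v u * ν u w) fun u hu => (hcon.2 v u).mp (left_ne_zero_of_mul hu)
  rw [hcon.sum_mul_eq_ite_of_level_eq hdef hrank hf (v.2.trans w.2.symm)] at hsplit
  have hcast := congrArg (Int.cast : ℤ → F) hsplit
  push_cast [apply_ite (Int.cast : ℤ → F)] at hcast
  simp only [Matrix.add_apply, Matrix.mul_apply, Matrix.of_apply, Matrix.smul_apply,
    Matrix.one_apply, smul_eq_mul, mul_comm (ν _ w.1 : F), mul_ite, mul_one, mul_zero,
    ← hcast, Subtype.ext_iff, eq_comm (a := w.1)]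

end Graph

theorem homology_vanishes_over_field_general
    {V : Type*} [Fintype V] [DecidableEq V] (G : SimpleGraph V) (ν : V → V → ℤ)
    (hcon : IsConnection G ν) (hdef : IsDeformable G ν)
    (r : ℕ) (hr : 0 < r) (hrank : ∀ v : V, (∑ w : V, ν w v ^ 2) = (r : ℤ))
    (F : Type*) [Field F]
    (hchar : ringChar F = 0 ∨ (Nat.Prime (ringChar F) ∧ ¬ ringChar F ∣ r))
    (f : V → ℤ) (hf : IsGradation G f) :
    (∀ k : ℤ, Subsingleton (HkF F f ν k)) ∧ (∀ k : ℤ, Subsingleton (coHkF F f ν k)) := by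
  have hrF : IsUnit ((r : ℤ) : F) := by
    refine Ne.isUnit fun h => ?_
    have hdvd : ringChar F ∣ r := (ringChar.spec F r).mp (by exact_mod_cast h)
    rcases hchar with h0 | ⟨-, hndvd⟩
    · exact hr.ne' (Nat.eq_zero_of_zero_dvd (h0 ▸ hdvd))
    · exact hndvd hdvd
  have hsq := dmapF_comp_add_comp_eq_smul F hcon hdef hrank hf
  refine ⟨fun k => ?_, fun k => ?_⟩ <;>
    rw [Submodule.Quotient.subsingleton_iff, Submodule.comap_subtype_eq_top]
  · exact LinearMap.ker_le_range_of_comp_add_comp_eq_smul hrF (hsq k)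
  · exact LinearMap.ker_le_range_of_comp_add_comp_eq_smul hrF ((add_comm _ _).trans (hsq k))

/-- For a connected deformation graph of rank `r > 0` and a field `F` whose
characteristic is `0` or a prime not dividing `r`, the associated chain and cochain
complexes over `F` are exact for every gradation `f`. -/
theorem homology_vanishes_over_field
    {V : Type*} [Fintype V] [DecidableEq V] (G : SimpleGraph V) (ν : V → V → ℤ)
    (hcon : IsConnection G ν) (hdef : IsDeformable G ν) (hconn : G.Connected)
    (r : ℕ) (hr : 0 < r) (hrank : ∀ v : V, (∑ w : V, ν w v ^ 2) = (r : ℤ))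
    (F : Type*) [Field F]
    (hchar : ringChar F = 0 ∨ (Nat.Prime (ringChar F) ∧ ¬ ringChar F ∣ r))
    (f : V → ℤ) (hf : IsGradation G f) :
    (∀ k : ℤ, Subsingleton (HkF F f ν k)) ∧ (∀ k : ℤ, Subsingleton (coHkF F f ν k)) :=
  homology_vanishes_over_field_general G ν hcon hdef r hr hrank F hchar f hf
end
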